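/- For every n ≥ 0 the following three identities hold: r*_{n+1} + r*_n = α − α_n R*_n; r_{n+1} + r_n = (1 − α_n)R_n − β; and t R*_n − (t−1)R_n = 2n + 1 + α + β + γ. -/

import Mathlib

/-!
The first two identities come from substituting the three-term recurrence
`y P_n = P_{n+1} + α_n P_n + β_n P_{n-1}` into the integrals defining `r*_{n+1}` and `r_{n+1}`:
the weight vanishes at `0` and `1`, so dividing by `y` or `1 - y` costs nothing at the endpoints,
`y / (1 - y) = 1 / (1 - y) - 1`, and `β_n h_{n-1} = h_n` turns the `β_n`-term into `r*_n`
(resp. `r_n`). The third is `∫₀¹ ((y - t) w P_n²)' dy = 0`: the boundary terms vanish,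
`((y - t) w)' = (1 + α + β + γ) w - α t w / y - β (1 - t) w / (1 - y)`, and orthogonality gives
`∫ (y - t) P_n' P_n w = n h_n`.
-/

open MeasureTheory Real

/-- The generalized Jacobi weight `w(x;t) = (x-t)^γ x^α (1-x)^β`. -/
noncomputable def genJacobiWeight (α β γ t x : ℝ) : ℝ :=
  (x - t) ^ γ * x ^ α * (1 - x) ^ β

namespace Polynomial

variable {R : Type*} [CommRing R]

theorem natDegree_X_sub_C_mul_derivative_le (p : R[X]) (t : R) :
    ((X - C t) * derivative p).natDegree ≤ p.natDegree := by
  rcases eq_or_ne p.natDegree 0 with h0 | h0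
  · simp [derivative_of_natDegree_zero h0]
  · calc ((X - C t) * derivative p).natDegree
        ≤ (X - C t).natDegree + (derivative p).natDegree := natDegree_mul_le
      _ ≤ 1 + (p.natDegree - 1) := add_le_add (natDegree_X_sub_C_le t) (natDegree_derivative_le p)
      _ = p.natDegree := by omega

theorem Monic.coeff_X_sub_C_mul_derivative {p : R[X]} (hp : p.Monic) (t : R) :
    ((X - C t) * derivative p).coeff p.natDegree = (p.natDegree : R) := by
  have hlead := hp.coeff_natDegree
  rw [sub_mul, coeff_sub, coeff_C_mul, coeff_derivative,
    coeff_eq_zero_of_natDegree_lt (Nat.lt_succ_self _), zero_mul, mul_zero, sub_zero]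
  cases h : p.natDegree with
  | zero => rw [coeff_X_mul_zero, Nat.cast_zero]
  | succ m => rw [coeff_X_mul, coeff_derivative, ← h, hlead, one_mul, h, Nat.cast_succ]

end Polynomial

open Polynomial Set

section Orthogonality

variable {w : ℝ → ℝ} {P : ℕ → ℝ[X]} {h : ℕ → ℝ}

theorem intervalIntegrable_eval_mul_eval_mul (hw : IntervalIntegrable w volume 0 1)
    (p q : ℝ[X]) : IntervalIntegrable (fun x => p.eval x * q.eval x * w x) volume 0 1 :=
  hw.continuousOn_mul (p.continuous.mul q.continuous).continuousOn

theorem coeff_of_monic_natDegree_eq (hmonic : ∀ n, (P n).Monic ∧ (P n).natDegree = n)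
    {m n : ℕ} (hmn : m ≤ n) : (P m).coeff n = if m = n then 1 else 0 := by
  split_ifs with hmn'
  · subst hmn'
    simpa [(hmonic m).2] using (hmonic m).1.coeff_natDegree
  · exact coeff_eq_zero_of_natDegree_lt ((hmonic m).2.trans_lt (lt_of_le_of_ne hmn hmn'))

theorem integral_eval_mul_eval_mul_of_natDegree_le (hw : IntervalIntegrable w volume 0 1)
    (hmonic : ∀ n, (P n).Monic ∧ (P n).natDegree = n)
    (horth : ∀ m n, (∫ x in (0:ℝ)..1, (P m).eval x * (P n).eval x * w x)
      = if m = n then h n else 0)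
    {q : ℝ[X]} {n : ℕ} (hq : q.natDegree ≤ n) :
    ∫ x in (0:ℝ)..1, q.eval x * (P n).eval x * w x = q.coeff n * h n := by
  suffices key : ∀ (m : ℕ) (q : ℝ[X]), q.degree < m → ∀ n : ℕ, m ≤ n + 1 →
      ∫ x in (0:ℝ)..1, q.eval x * (P n).eval x * w x = q.coeff n * h n from
    key (n + 1) q ((degree_le_of_natDegree_le hq).trans_lt (by exact_mod_cast n.lt_succ_self))
      n le_rfl
  intro m
  induction m with
  | zero =>
    intro q hq n _
    obtain rfl : q = 0 := by
      ext k; exact (degree_lt_iff_coeff_zero q 0).1 hq k k.zero_le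
    simp
  | succ m ih =>
    intro q hq n hmn
    set q' := q - C (q.coeff m) * P m
    have hq' : q'.degree < m := by
      rw [degree_lt_iff_coeff_zero]
      intro k hk
      rcases hk.eq_or_lt with rfl | hk
      · simp [q', coeff_of_monic_natDegree_eq hmonic le_rfl]
      · have hqk : q.coeff k = 0 := (degree_lt_iff_coeff_zero q (m + 1)).1 hq k hk
        simp [q', hqk, coeff_of_monic_natDegree_eq hmonic hk.le, hk.ne]
    have hsplit : ∀ x, q.eval x * (P n).eval x * w x
        = q.coeff m * ((P m).eval x * (P n).eval x * w x) + q'.eval x * (P n).eval x * w x := by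
      intro x; simp only [q', eval_sub, eval_mul, eval_C]; ring
    rw [intervalIntegral.integral_congr fun x _ => hsplit x,
      intervalIntegral.integral_add ((intervalIntegrable_eval_mul_eval_mul hw _ _).const_mul _)
        (intervalIntegrable_eval_mul_eval_mul hw _ _),
      intervalIntegral.integral_const_mul, horth, ih q' hq' n (by omega)]
    simp only [q', coeff_sub, coeff_C_mul, coeff_of_monic_natDegree_eq hmonic (by omega : m ≤ n)]
    split_ifs <;> ring

theorem integral_mul_eval_mul_eval_mul {a b : ℕ → ℝ} (hw : IntervalIntegrable w volume 0 1)
    (hrec : ∀ n, ∀ x : ℝ, x * (P n).eval x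
      = (P (n + 1)).eval x + a n * (P n).eval x + b n * (P (n - 1)).eval x) (n m : ℕ) :
    ∫ x in (0:ℝ)..1, x * (P n).eval x * (P m).eval x * w x
      = (∫ x in (0:ℝ)..1, (P (n + 1)).eval x * (P m).eval x * w x)
        + a n * (∫ x in (0:ℝ)..1, (P n).eval x * (P m).eval x * w x)
        + b n * ∫ x in (0:ℝ)..1, (P (n - 1)).eval x * (P m).eval x * w x := by
  have hint := intervalIntegrable_eval_mul_eval_mul hw
  have hpt : ∀ x, x * (P n).eval x * (P m).eval x * w x
      = (P (n + 1)).eval x * (P m).eval x * w x + a n * ((P n).eval x * (P m).eval x * w x)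
        + b n * ((P (n - 1)).eval x * (P m).eval x * w x) := fun x => by rw [hrec n x]; ring
  rw [intervalIntegral.integral_congr fun x _ => hpt x,
    intervalIntegral.integral_add ((hint _ _).add ((hint _ _).const_mul _))
      ((hint _ _).const_mul _),
    intervalIntegral.integral_add (hint _ _) ((hint _ _).const_mul _),
    intervalIntegral.integral_const_mul, intervalIntegral.integral_const_mul]

theorem recurrence_coeff_mul_norm {a b : ℕ → ℝ} (hw : IntervalIntegrable w volume 0 1)
    (horth : ∀ m n, (∫ x in (0:ℝ)..1, (P m).eval x * (P n).eval x * w x)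
      = if m = n then h n else 0)
    (hrec : ∀ n, ∀ x : ℝ, x * (P n).eval x
      = (P (n + 1)).eval x + a n * (P n).eval x + b n * (P (n - 1)).eval x)
    {n : ℕ} (hn : 1 ≤ n) : b n * h (n - 1) = h n := by
  obtain ⟨k, rfl⟩ := Nat.exists_eq_add_of_le' hn
  rw [Nat.add_sub_cancel]
  calc b (k + 1) * h k
      = ∫ x in (0:ℝ)..1, x * (P (k + 1)).eval x * (P k).eval x * w x := by
        simp [integral_mul_eval_mul_eval_mul hw hrec, horth, show k + 1 + 1 ≠ k by omega]
    _ = ∫ x in (0:ℝ)..1, x * (P k).eval x * (P (k + 1)).eval x * w x :=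
        intervalIntegral.integral_congr fun x _ => by ring
    _ = h (k + 1) := by simp [integral_mul_eval_mul_eval_mul hw hrec, horth]

end Orthogonality

theorem eq_div_mul_recurrence_coeff {b h x J : ℕ → ℝ} {c : ℝ} (hpos : ∀ n, 0 < h n)
    (hb0 : b 0 = 0) (hbh : ∀ n, 1 ≤ n → b n * h (n - 1) = h n)
    (hx0 : x 0 = 0) (hx : ∀ n, 1 ≤ n → x n = c / h (n - 1) * J n) (n : ℕ) :
    x n = c / h n * (b n * J n) := by
  rcases Nat.eq_zero_or_pos n with rfl | hn
  · simp [hx0, hb0]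
  · rw [hx n hn, ← hbh n hn]
    have hb : b n ≠ 0 := left_ne_zero_of_mul (hbh n hn ▸ (hpos n).ne')
    field_simp [(hpos (n - 1)).ne']

section GenJacobiWeight

variable {α β γ t : ℝ}

theorem genJacobiWeight_zero (hα : 0 < α) : genJacobiWeight α β γ t 0 = 0 := by
  simp [genJacobiWeight, zero_rpow hα.ne']

theorem genJacobiWeight_one (hβ : 0 < β) : genJacobiWeight α β γ t 1 = 0 := by
  simp [genJacobiWeight, zero_rpow hβ.ne']

theorem continuousOn_sub_rpow (γ : ℝ) {s : Set ℝ} (hs : ∀ x ∈ s, t < x) :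
    ContinuousOn (fun x => (x - t) ^ γ) s :=
  (continuous_id.sub continuous_const).continuousOn.rpow_const
    fun x hx => Or.inl (sub_pos.2 (hs x hx)).ne'

theorem continuousOn_genJacobiWeight (hα : 0 ≤ α) (hβ : 0 ≤ β) (ht : t < 0) :
    ContinuousOn (genJacobiWeight α β γ t) (Icc 0 1) :=
  ((continuousOn_sub_rpow γ fun _ hx => ht.trans_le hx.1).mul
    (continuous_id.rpow_const fun _ => Or.inr hα).continuousOn).mul
    ((continuous_const.sub continuous_id).rpow_const fun _ => Or.inr hβ).continuousOn

theorem intervalIntegrable_genJacobiWeight (hα : 0 ≤ α) (hβ : 0 ≤ β) (ht : t < 0) :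
    IntervalIntegrable (genJacobiWeight α β γ t) volume 0 1 :=
  (continuousOn_genJacobiWeight hα hβ ht).intervalIntegrable_of_Icc zero_le_one

theorem intervalIntegrable_mul_rpow_div_self {c : ℝ → ℝ} {s : ℝ} (hc : ContinuousOn c (Icc 0 1))
    (hs : 0 < s) : IntervalIntegrable (fun x => c x * x ^ s / x) volume 0 1 := by
  refine ((intervalIntegral.intervalIntegrable_rpow' (by linarith : -1 < s - 1)).continuousOn_mul
    (by rwa [uIcc_of_le zero_le_one])).congr fun x hx => ?_
  rw [uIoc_of_le zero_le_one] at hx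
  simp only [rpow_sub_one hx.1.ne', mul_div_assoc]

theorem intervalIntegrable_mul_genJacobiWeight_div_self (hα : 0 < α) (hβ : 0 ≤ β) (ht : t < 0)
    {g : ℝ → ℝ} (hg : Continuous g) :
    IntervalIntegrable (fun x => g x * genJacobiWeight α β γ t x / x) volume 0 1 := by
  have hc : ContinuousOn (fun x => g x * (x - t) ^ γ * (1 - x) ^ β) (Icc 0 1) :=
    (hg.continuousOn.mul (continuousOn_sub_rpow γ fun _ hx => ht.trans_le hx.1)).mul
      ((continuous_const.sub continuous_id).rpow_const fun _ => Or.inr hβ).continuousOn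
  convert intervalIntegrable_mul_rpow_div_self hc hα using 2 with x
  simp only [genJacobiWeight]; ring

theorem intervalIntegrable_mul_genJacobiWeight_div_one_sub (hα : 0 ≤ α) (hβ : 0 < β)
    (ht : t < 0) {g : ℝ → ℝ} (hg : Continuous g) :
    IntervalIntegrable (fun x => g x * genJacobiWeight α β γ t x / (1 - x)) volume 0 1 := by
  have hreflect : MapsTo (fun u : ℝ => 1 - u) (Icc 0 1) (Icc 0 1) :=
    fun u hu => ⟨by linarith [hu.2], by linarith [hu.1]⟩
  have hc : ContinuousOn (fun u => g (1 - u) * (1 - u - t) ^ γ * (1 - u) ^ α) (Icc 0 1) :=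
    ((hg.comp (continuous_const.sub continuous_id)).continuousOn.mul
      ((continuousOn_sub_rpow γ fun _ hx => ht.trans_le hx.1).comp
        (continuous_const.sub continuous_id).continuousOn hreflect)).mul
      ((continuous_const.sub continuous_id).rpow_const fun _ => Or.inr hα).continuousOn
  have := ((intervalIntegrable_mul_rpow_div_self hc hβ).comp_sub_left 1).symm
  simp only [sub_zero, sub_self, sub_sub_cancel] at this
  convert this using 2 with x
  simp only [genJacobiWeight]; ring

theorem integral_mul_genJacobiWeight_div_self_of_recurrence (hα : 0 < α) (hβ : 0 < β)
    (ht : t < 0) {f fNext fPrev : ℝ → ℝ} (hf : Continuous f) (hfPrev : Continuous fPrev) {a b : ℝ}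
    (hrec : ∀ y, y * f y = fNext y + a * f y + b * fPrev y) :
    ∫ y in (0:ℝ)..1, f y * fNext y * genJacobiWeight α β γ t y / y
      = (∫ y in (0:ℝ)..1, f y * f y * genJacobiWeight α β γ t y)
        - a * (∫ y in (0:ℝ)..1, f y ^ 2 * genJacobiWeight α β γ t y / y)
        - b * ∫ y in (0:ℝ)..1, fPrev y * f y * genJacobiWeight α β γ t y / y := by
  have hpt : ∀ y, f y * fNext y * genJacobiWeight α β γ t y / y
      = f y * f y * genJacobiWeight α β γ t y
        - a * (f y ^ 2 * genJacobiWeight α β γ t y / y)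
        - b * (fPrev y * f y * genJacobiWeight α β γ t y / y) := by
    intro y
    rcases eq_or_ne y 0 with rfl | hy
    · simp [genJacobiWeight_zero hα]
    · rw [show fNext y = y * f y - a * f y - b * fPrev y by linarith [hrec y]]
      field_simp
  have hA : IntervalIntegrable (fun y => f y * f y * genJacobiWeight α β γ t y) volume 0 1 :=
    (intervalIntegrable_genJacobiWeight hα.le hβ.le ht).continuousOn_mul (hf.mul hf).continuousOn
  have hB := intervalIntegrable_mul_genJacobiWeight_div_self hα hβ.le ht (γ := γ)
    (g := fun y => f y ^ 2) (by fun_prop)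
  have hC := intervalIntegrable_mul_genJacobiWeight_div_self hα hβ.le ht (γ := γ)
    (g := fun y => fPrev y * f y) (by fun_prop)
  rw [intervalIntegral.integral_congr fun y _ => hpt y,
    intervalIntegral.integral_sub (hA.sub (hB.const_mul a)) (hC.const_mul b),
    intervalIntegral.integral_sub hA (hB.const_mul a),
    intervalIntegral.integral_const_mul, intervalIntegral.integral_const_mul]

theorem integral_mul_genJacobiWeight_div_one_sub_of_recurrence (hα : 0 < α) (hβ : 0 < β)
    (ht : t < 0) {f fNext fPrev : ℝ → ℝ} (hf : Continuous f) (hfPrev : Continuous fPrev) {a b : ℝ}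
    (hrec : ∀ y, y * f y = fNext y + a * f y + b * fPrev y) :
    ∫ y in (0:ℝ)..1, f y * fNext y * genJacobiWeight α β γ t y / (1 - y)
      = (1 - a) * (∫ y in (0:ℝ)..1, f y ^ 2 * genJacobiWeight α β γ t y / (1 - y))
        - (∫ y in (0:ℝ)..1, f y * f y * genJacobiWeight α β γ t y)
        - b * ∫ y in (0:ℝ)..1, fPrev y * f y * genJacobiWeight α β γ t y / (1 - y) := by
  have hpt : ∀ y, f y * fNext y * genJacobiWeight α β γ t y / (1 - y)
      = (1 - a) * (f y ^ 2 * genJacobiWeight α β γ t y / (1 - y))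
        - f y * f y * genJacobiWeight α β γ t y
        - b * (fPrev y * f y * genJacobiWeight α β γ t y / (1 - y)) := by
    intro y
    rcases eq_or_ne y 1 with rfl | hy
    · simp [genJacobiWeight_one hβ]
    · have h1y : 1 - y ≠ 0 := sub_ne_zero.2 hy.symm
      rw [show fNext y = y * f y - a * f y - b * fPrev y by linarith [hrec y]]
      field_simp
      ring
  have hA : IntervalIntegrable (fun y => f y * f y * genJacobiWeight α β γ t y) volume 0 1 :=
    (intervalIntegrable_genJacobiWeight hα.le hβ.le ht).continuousOn_mul (hf.mul hf).continuousOn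
  have hB := intervalIntegrable_mul_genJacobiWeight_div_one_sub hα.le hβ ht (γ := γ)
    (g := fun y => f y ^ 2) (by fun_prop)
  have hC := intervalIntegrable_mul_genJacobiWeight_div_one_sub hα.le hβ ht (γ := γ)
    (g := fun y => fPrev y * f y) (by fun_prop)
  rw [intervalIntegral.integral_congr fun y _ => hpt y,
    intervalIntegral.integral_sub ((hB.const_mul _).sub hA) (hC.const_mul b),
    intervalIntegral.integral_sub (hB.const_mul _) hA,
    intervalIntegral.integral_const_mul, intervalIntegral.integral_const_mul]

theorem hasDerivAt_genJacobiWeight {x : ℝ} (hx0 : 0 < x) (hx1 : x < 1) (ht : t < x) :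
    HasDerivAt (genJacobiWeight α β γ t)
      (genJacobiWeight α β γ t x * (γ / (x - t) + α / x - β / (1 - x))) x := by
  have hxt : x - t ≠ 0 := (sub_pos.2 ht).ne'
  have h1x : 1 - x ≠ 0 := (sub_pos.2 hx1).ne'
  refine (((((hasDerivAt_id x).sub_const t).rpow_const (p := γ) (Or.inl hxt)).mul
    ((hasDerivAt_id x).rpow_const (p := α) (Or.inl hx0.ne'))).mul
    (((hasDerivAt_id x).const_sub 1).rpow_const (p := β) (Or.inl h1x))).congr_deriv ?_
  simp only [genJacobiWeight, Pi.mul_apply, id, rpow_sub_one hxt, rpow_sub_one hx0.ne',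
    rpow_sub_one h1x]
  field_simp
  ring

theorem hasDerivAt_sub_mul_genJacobiWeight {x : ℝ} (hx0 : 0 < x) (hx1 : x < 1) (ht : t < x) :
    HasDerivAt (fun y => (y - t) * genJacobiWeight α β γ t y)
      ((1 + α + β + γ) * genJacobiWeight α β γ t x
        - α * t * genJacobiWeight α β γ t x / x
        - β * (1 - t) * genJacobiWeight α β γ t x / (1 - x)) x := by
  have hxt : x - t ≠ 0 := (sub_pos.2 ht).ne'
  have h1x : 1 - x ≠ 0 := (sub_pos.2 hx1).ne'
  refine (((hasDerivAt_id x).sub_const t).mul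
    (hasDerivAt_genJacobiWeight hx0 hx1 ht)).congr_deriv ?_
  simp only [id]
  field_simp
  ring

theorem integral_sq_genJacobiWeight_by_parts (hα : 0 < α) (hβ : 0 < β) (ht : t < 0)
    (p : ℝ[X]) :
    α * t * (∫ y in (0:ℝ)..1, p.eval y ^ 2 * genJacobiWeight α β γ t y / y)
      + β * (1 - t) * (∫ y in (0:ℝ)..1, p.eval y ^ 2 * genJacobiWeight α β γ t y / (1 - y))
      = (1 + α + β + γ) * (∫ y in (0:ℝ)..1, p.eval y * p.eval y * genJacobiWeight α β γ t y)
        + 2 * ∫ y in (0:ℝ)..1,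
          ((X - C t) * derivative p).eval y * p.eval y * genJacobiWeight α β γ t y := by
  have hw := intervalIntegrable_genJacobiWeight hα.le hβ.le ht (γ := γ)
  have hA := intervalIntegrable_eval_mul_eval_mul hw p p
  have hD := intervalIntegrable_eval_mul_eval_mul hw ((X - C t) * derivative p) p
  have hB := intervalIntegrable_mul_genJacobiWeight_div_self hα hβ.le ht (γ := γ)
    (g := fun y => p.eval y ^ 2) (by fun_prop)
  have hC := intervalIntegrable_mul_genJacobiWeight_div_one_sub hα.le hβ ht (γ := γ)
    (g := fun y => p.eval y ^ 2) (by fun_prop)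
  have hFTC := intervalIntegral.integral_eq_sub_of_hasDerivAt_of_le zero_le_one
    (f := fun y => (y - t) * genJacobiWeight α β γ t y * (p.eval y * p.eval y))
    (((continuous_id.sub continuous_const).continuousOn.mul
      (continuousOn_genJacobiWeight hα.le hβ.le ht)).mul (by fun_prop))
    (fun x hx => ((hasDerivAt_sub_mul_genJacobiWeight hx.1 hx.2 (ht.trans hx.1)).mul
      ((p.hasDerivAt x).mul (p.hasDerivAt x))).congr_deriv
        (by simp only [Pi.mul_apply, eval_mul, eval_sub, eval_X, eval_C]; ring))
    ((((hA.const_mul (1 + α + β + γ)).sub (hB.const_mul (α * t))).sub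
      (hC.const_mul (β * (1 - t)))).add (hD.const_mul 2))
  rw [intervalIntegral.integral_add (((hA.const_mul _).sub (hB.const_mul _)).sub
      (hC.const_mul _)) (hD.const_mul _),
    intervalIntegral.integral_sub ((hA.const_mul _).sub (hB.const_mul _)) (hC.const_mul _),
    intervalIntegral.integral_sub (hA.const_mul _) (hB.const_mul _)] at hFTC
  simp only [intervalIntegral.integral_const_mul, genJacobiWeight_zero hα,
    genJacobiWeight_one hβ, mul_zero, zero_mul, sub_zero] at hFTC
  linarith

end GenJacobiWeight

theorem statement8
    (α β γ t : ℝ) (hα : 0 < α) (hβ : 0 < β) (ht : t < 0)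
    (P : ℕ → Polynomial ℝ) (h : ℕ → ℝ)
    (hmonic : ∀ n, (P n).Monic ∧ (P n).natDegree = n)
    (hpos : ∀ n, 0 < h n)
    (horth : ∀ m n, (∫ x in (0:ℝ)..1,
        (P m).eval x * (P n).eval x * genJacobiWeight α β γ t x)
      = if m = n then h n else 0)
    (a b : ℕ → ℝ) (hb0 : b 0 = 0)
    (hrec : ∀ n, ∀ x : ℝ, x * (P n).eval x
      = (P (n + 1)).eval x + a n * (P n).eval x + b n * (P (n - 1)).eval x)
    (R Rs r rs : ℕ → ℝ)
    (hR : ∀ n, R n = β / h n *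
      ∫ y in (0:ℝ)..1, ((P n).eval y) ^ 2 * genJacobiWeight α β γ t y / (1 - y))
    (hRs : ∀ n, Rs n = α / h n *
      ∫ y in (0:ℝ)..1, ((P n).eval y) ^ 2 * genJacobiWeight α β γ t y / y)
    (hr0 : r 0 = 0) (hrs0 : rs 0 = 0)
    (hr : ∀ n, 1 ≤ n → r n = β / h (n - 1) *
      ∫ y in (0:ℝ)..1, (P (n - 1)).eval y * (P n).eval y * genJacobiWeight α β γ t y / (1 - y))
    (hrs : ∀ n, 1 ≤ n → rs n = α / h (n - 1) *
      ∫ y in (0:ℝ)..1, (P (n - 1)).eval y * (P n).eval y * genJacobiWeight α β γ t y / y) :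
    ∀ n : ℕ,
      rs (n + 1) + rs n = α - a n * Rs n ∧
      r (n + 1) + r n = (1 - a n) * R n - β ∧
      t * Rs n - (t - 1) * R n = 2 * n + 1 + α + β + γ := by
  have hw := intervalIntegrable_genJacobiWeight hα.le hβ.le ht (γ := γ)
  have hbh : ∀ n, 1 ≤ n → b n * h (n - 1) = h n := fun n hn =>
    recurrence_coeff_mul_norm hw horth hrec hn
  intro n
  have hhn := (hpos n).ne'
  have hnorm : ∫ x in (0:ℝ)..1, (P n).eval x * (P n).eval x * genJacobiWeight α β γ t x = h n := by
    rw [horth, if_pos rfl]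
  refine ⟨?_, ?_, ?_⟩
  · rw [hrs (n + 1) n.succ_pos, eq_div_mul_recurrence_coeff hpos hb0 hbh hrs0 hrs n, hRs n,
      Nat.add_sub_cancel, integral_mul_genJacobiWeight_div_self_of_recurrence hα hβ ht
        (P n).continuous (P (n - 1)).continuous (hrec n), hnorm]
    field_simp
    ring
  · rw [hr (n + 1) n.succ_pos, eq_div_mul_recurrence_coeff hpos hb0 hbh hr0 hr n, hR n,
      Nat.add_sub_cancel, integral_mul_genJacobiWeight_div_one_sub_of_recurrence hα hβ ht
        (P n).continuous (P (n - 1)).continuous (hrec n), hnorm]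
    field_simp
    ring
  · have hbyparts := integral_sq_genJacobiWeight_by_parts hα hβ ht (γ := γ) (P n)
    have hcoeff : ((X - C t) * derivative (P n)).coeff n = (n : ℝ) := by
      simpa only [(hmonic n).2] using (hmonic n).1.coeff_X_sub_C_mul_derivative t
    rw [hnorm, integral_eval_mul_eval_mul_of_natDegree_le hw hmonic horth
      ((natDegree_X_sub_C_mul_derivative_le (P n) t).trans (hmonic n).2.le), hcoeff] at hbyparts
    rw [hRs n, hR n]
    field_simp
    linear_combination hbyparts
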